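/- arXiv:2209.02398 — 2 statements merged into one kernel-verified Lean document; each statement's English description precedes it below -/
import Mathlib

section
/- Let Φ and Ψ be subgroups of O, each an even unimodular full-rank lattice in 𝕆 ≅ ℝ⁸ with respect to ½⟨x,y⟩, such that Φ + Ψ = O and Φ ∩ Ψ = 2O. Then Λ(Φ,Ψ) = {(a,b,c) ∈ O³ : a+b ∈ Φ, b+c ∈ Φ, a+c ∈ Φ, a+b+c ∈ Ψ} is an even unimodular full-rank lattice in 𝕆³ ≅ ℝ²⁴ with respect to ½⟨x,y⟩ containing no vector of norm 2 (hence it has minimal norm 4 and is a Leech lattice). -/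
noncomputable section

open scoped Quaternion

/-- The real octonions, as the Cayley–Dickson double of the quaternions. -/
abbrev Oct : Type := ℍ[ℝ] × ℍ[ℝ]

namespace Octonion

/-- Octonion multiplication: `(a,b)(c,d) = (ac − d̄b, da + bc̄)`. -/
def omul (x y : Oct) : Oct :=
  (x.1 * y.1 - star y.2 * x.2, y.2 * x.1 + x.2 * star y.1)

/-- Octonion conjugation: `(a,b)‾ = (ā, −b)`. -/
def oconj (x : Oct) : Oct := (star x.1, -x.2)

/-- The octonion norm `N(x) = x x̄`. -/
def oN (x : Oct) : ℝ := Quaternion.normSq x.1 + Quaternion.normSq x.2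

/-- The doubled inner product `⟨x,y⟩ = N(x+y) − N(x) − N(y)`. -/
def oinner (x y : Oct) : ℝ := oN (x + y) - oN x - oN y

/-- The octonion unit. -/
def oone : Oct := (1, 0)

/-- The basic triple. -/
def oi : Oct := ((⟨0,1,0,0⟩ : ℍ[ℝ]), 0)
def oj : Oct := ((⟨0,0,1,0⟩ : ℍ[ℝ]), 0)
def ol : Oct := (0, 1)

/-- The standard basis `i_0, …, i_6` (with `i_∞ = 1`). -/
def e0 : Oct := -(omul (omul oi oj) ol)
def e1 : Oct := omul oi ol
def e2 : Oct := oi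
def e3 : Oct := oj
def e4 : Oct := ol
def e5 : Oct := omul oi oj
def e6 : Oct := omul oj ol

/-- The simple roots `α₁, …, α₈` of the octavian integers. -/
def octBasis : Fin 8 → Oct :=
  ![ (2⁻¹ : ℝ) • (-e1 + e5 + e6 + e0),
     (2⁻¹ : ℝ) • (-e1 - e2 - e4 - e0),
     (2⁻¹ : ℝ) • (e2 + e3 - e5 - e0),
     (2⁻¹ : ℝ) • (e1 - e3 + e4 + e5),
     (2⁻¹ : ℝ) • (-e2 + e3 - e5 + e0),
     (2⁻¹ : ℝ) • (e2 - e4 + e5 - e6),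
     (2⁻¹ : ℝ) • (-e1 - e3 + e4 - e5),
     (2⁻¹ : ℝ) • (-oone + e1 - e4 + e6) ]

/-- The octavian integer ring `O`, as the ℤ-span of `α₁, …, α₈`. -/
def OctInt : Submodule ℤ Oct := Submodule.span ℤ (Set.range octBasis)

/-- The set `2O`. -/
def twoO : Set Oct := (fun x : Oct => x + x) '' (OctInt : Set Oct)

/-- The set `Os = {xs : x ∈ O}`. -/
def Os (s : Oct) : Set Oct := (fun x => omul x s) '' (OctInt : Set Oct)

/-- The set `sO = {sx : x ∈ O}`. -/
def sO (s : Oct) : Set Oct := (fun x => omul s x) '' (OctInt : Set Oct)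

/-- The norm on `𝕆³`. -/
def oN3 (p : Oct × Oct × Oct) : ℝ := oN p.1 + oN p.2.1 + oN p.2.2

/-- The doubled inner product on `𝕆³`. -/
def oinner3 (p q : Oct × Oct × Oct) : ℝ := oN3 (p + q) - oN3 p - oN3 q

/-! For `v = (a, b, c)` and `v' = (a', b', c')` the norm and inner product of `Λ` are expressed
through the coordinate sums constrained by `Φ` and `Ψ`:
`N a + N b + N c = N (a + b) + N (b + c) + N (a + c) - N (a + b + c)` and
`⟨v, v'⟩ = ⟨a + b + c, a' + b' + c'⟩ - ⟨a + b, b' + c'⟩ - ⟨b + c, a' + b'⟩ + 2 ⟨b, b'⟩`,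
where `⟨b, b'⟩ ∈ ℤ` because the Gram matrix of the `αᵢ` is the `E₈` Cartan matrix. This gives
evenness and integrality. Conversely, pairing `v` with `(x, x, 0)`, `(x, 0, x)`, `(0, x, x)` for
`x ∈ Φ` and `(y, y, y)` for `y ∈ Ψ`, which lie in `Λ` because `2O ⊆ Φ ∩ Ψ`, puts the coordinate
sums of `v` into `Φ` and `Ψ` by self-duality. Nonzero octavian integers have norm at least `1`,
which gives discreteness and shows that a vector of norm `2` has a zero coordinate; the other two
then lie in `Φ` with sum in `Ψ`, which the evenness of `Φ` and `Φ ∩ Ψ = 2O` exclude. -/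

lemma oN_eq_coords (x : Oct) : oN x =
    x.1.re ^ 2 + x.1.imI ^ 2 + x.1.imJ ^ 2 + x.1.imK ^ 2
      + x.2.re ^ 2 + x.2.imI ^ 2 + x.2.imJ ^ 2 + x.2.imK ^ 2 := by
  simp only [oN, Quaternion.normSq_def']; ring

lemma oinner_eq_coords (x y : Oct) : oinner x y =
    2 * (x.1.re * y.1.re + x.1.imI * y.1.imI + x.1.imJ * y.1.imJ + x.1.imK * y.1.imK
      + x.2.re * y.2.re + x.2.imI * y.2.imI + x.2.imJ * y.2.imJ + x.2.imK * y.2.imK) := by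
  simp only [oinner, oN_eq_coords, Prod.fst_add, Prod.snd_add, Quaternion.re_add,
    Quaternion.imI_add, Quaternion.imJ_add, Quaternion.imK_add]
  ring

lemma e0_eq : e0 = (0, ⟨0, 0, 0, -1⟩) := by
  refine Prod.ext ?_ ?_ <;> ext <;>
    simp [e0, omul, Quaternion.re_mul, Quaternion.imI_mul, Quaternion.imJ_mul,
      Quaternion.imK_mul] <;> simp [oi, oj, ol]

lemma e1_eq : e1 = (0, ⟨0, 1, 0, 0⟩) := by
  refine Prod.ext ?_ ?_ <;> ext <;>
    simp [e1, omul, Quaternion.re_mul, Quaternion.imI_mul, Quaternion.imJ_mul,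
      Quaternion.imK_mul] <;> simp [oi, ol]

lemma e5_eq : e5 = (⟨0, 0, 0, 1⟩, 0) := by
  refine Prod.ext ?_ ?_ <;> ext <;>
    simp [e5, omul, Quaternion.re_mul, Quaternion.imI_mul, Quaternion.imJ_mul,
      Quaternion.imK_mul] <;> simp [oi, oj]

lemma e6_eq : e6 = (0, ⟨0, 0, 1, 0⟩) := by
  refine Prod.ext ?_ ?_ <;> ext <;>
    simp [e6, omul, Quaternion.re_mul, Quaternion.imI_mul, Quaternion.imJ_mul,
      Quaternion.imK_mul] <;> simp [oj, ol]

lemma octBasis_eq : octBasis = ![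
    (⟨0, 0, 0, 2⁻¹⟩, ⟨0, -2⁻¹, 2⁻¹, -2⁻¹⟩),
    (⟨0, -2⁻¹, 0, 0⟩, ⟨-2⁻¹, -2⁻¹, 0, 2⁻¹⟩),
    (⟨0, 2⁻¹, 2⁻¹, -2⁻¹⟩, ⟨0, 0, 0, 2⁻¹⟩),
    (⟨0, 0, -2⁻¹, 2⁻¹⟩, ⟨2⁻¹, 2⁻¹, 0, 0⟩),
    (⟨0, -2⁻¹, 2⁻¹, -2⁻¹⟩, ⟨0, 0, 0, -2⁻¹⟩),
    (⟨0, 2⁻¹, 0, 2⁻¹⟩, ⟨-2⁻¹, 0, -2⁻¹, 0⟩),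
    (⟨0, 0, -2⁻¹, -2⁻¹⟩, ⟨2⁻¹, -2⁻¹, 0, 0⟩),
    (⟨-2⁻¹, 0, 0, 0⟩, ⟨-2⁻¹, 2⁻¹, 2⁻¹, 0⟩)] := by
  ext i : 1
  fin_cases i <;> refine Prod.ext ?_ ?_ <;> ext <;>
    simp [octBasis] <;> simp [e0_eq, e1_eq, e2, e3, e4, e5_eq, e6_eq, oi, oj, ol, oone]

lemma oinner_octBasis (i j : Fin 8) :
    oinner (octBasis i) (octBasis j) = CartanMatrix.E₈ i j := by
  rw [octBasis_eq, oinner_eq_coords]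
  fin_cases i <;> fin_cases j <;> norm_num [CartanMatrix.E₈]

lemma oinner_comm (x y : Oct) : oinner x y = oinner y x := by
  simp only [oinner_eq_coords]; ring

lemma oinner_add_left (x y z : Oct) : oinner (x + y) z = oinner x z + oinner y z := by
  simp only [oinner_eq_coords, Prod.fst_add, Prod.snd_add, Quaternion.re_add, Quaternion.imI_add,
    Quaternion.imJ_add, Quaternion.imK_add]
  ring

lemma oinner_add_right (x y z : Oct) : oinner x (y + z) = oinner x y + oinner x z := by
  rw [oinner_comm, oinner_add_left, oinner_comm y, oinner_comm z]

@[simp] lemma oinner_zero_right (x : Oct) : oinner x 0 = 0 := by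
  simp [oinner_eq_coords]

lemma oinner_zsmul_left (n : ℤ) (x y : Oct) : oinner (n • x) y = n * oinner x y := by
  rw [oinner_eq_coords, oinner_eq_coords, Prod.smul_fst, Prod.smul_snd]
  simp only [Quaternion.re_smul, Quaternion.imI_smul, Quaternion.imJ_smul, Quaternion.imK_smul]
  simp only [zsmul_eq_mul]
  ring

lemma oinner_zsmul_right (n : ℤ) (x y : Oct) : oinner x (n • y) = n * oinner x y := by
  rw [oinner_comm, oinner_zsmul_left, oinner_comm]

lemma oinner_self (x : Oct) : oinner x x = 2 * oN x := by
  simp only [oinner_eq_coords, oN_eq_coords]; ring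

@[simp] lemma oN_zero : oN 0 = 0 := by
  simp [oN]

lemma oinner_self_div_two (x : Oct) : oinner x x / 2 = oN x := by
  rw [oinner_self]; ring

lemma oN_add (x y : Oct) : oN (x + y) = oN x + oN y + oinner x y := by
  rw [oinner]; ring

lemma oN_add_self (x : Oct) : oN (x + x) = 4 * oN x := by
  rw [oN_add, oinner_self]; ring

lemma oN_zsmul (n : ℤ) (x : Oct) : oN (n • x) = n ^ 2 * oN x := by
  have h := oinner_self (n • x)
  rw [oinner_zsmul_left, oinner_zsmul_right, oinner_self] at h
  linarith

lemma oN_eq_norm_sq (x : Oct) : oN x = ‖x.1‖ ^ 2 + ‖x.2‖ ^ 2 := by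
  simp only [oN, Quaternion.normSq_eq_norm_mul_self, sq]

lemma oN_pos {x : Oct} (hx : x ≠ 0) : 0 < oN x := by
  rw [oN_eq_norm_sq]
  obtain h | h : x.1 ≠ 0 ∨ x.2 ≠ 0 := by
    contrapose! hx
    exact Prod.ext hx.1 hx.2
  · linarith [pow_pos (norm_pos_iff.2 h) 2, sq_nonneg ‖x.2‖]
  · linarith [pow_pos (norm_pos_iff.2 h) 2, sq_nonneg ‖x.1‖]

lemma oN_add_add (a b c : Oct) :
    oN a + oN b + oN c = oN (a + b) + oN (b + c) + oN (a + c) - oN (a + b + c) := by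
  simp only [oN_add, oinner_add_left]
  ring

lemma oinner3_eq (p q : Oct × Oct × Oct) :
    oinner3 p q = oinner p.1 q.1 + oinner p.2.1 q.2.1 + oinner p.2.2 q.2.2 := by
  simp only [oinner3, oN3, oinner, Prod.fst_add, Prod.snd_add]
  ring

lemma oinner3_self_div_two (p : Oct × Oct × Oct) :
    oinner3 p p / 2 = oN p.1 + oN p.2.1 + oN p.2.2 := by
  rw [oinner3_eq, oinner_self, oinner_self, oinner_self]
  ring

lemma oinner3_mk (a b c a' b' c' : Oct) :
    oinner3 (a, b, c) (a', b', c') =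
      oinner (a + b + c) (a' + b' + c') - oinner (a + b) (b' + c') - oinner (b + c) (a' + b')
        + 2 * oinner b b' := by
  simp only [oinner3_eq, oinner_add_left, oinner_add_right]
  ring

lemma exists_int_oinner_eq {x y : Oct} (hx : x ∈ OctInt) (hy : y ∈ OctInt) :
    ∃ k : ℤ, oinner x y = k := by
  induction hx, hy using Submodule.span_induction₂ with
  | mem_mem u v hu hv =>
    obtain ⟨i, rfl⟩ := hu
    obtain ⟨j, rfl⟩ := hv
    exact ⟨_, oinner_octBasis i j⟩
  | zero_left v hv => exact ⟨0, by rw [oinner_comm]; simp⟩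
  | zero_right u hu => exact ⟨0, by simp⟩
  | add_left u v w _ _ _ h₁ h₂ =>
    obtain ⟨k₁, e₁⟩ := h₁
    obtain ⟨k₂, e₂⟩ := h₂
    exact ⟨k₁ + k₂, by rw [oinner_add_left, e₁, e₂]; push_cast; ring⟩
  | add_right u v w _ _ _ h₁ h₂ =>
    obtain ⟨k₁, e₁⟩ := h₁
    obtain ⟨k₂, e₂⟩ := h₂
    exact ⟨k₁ + k₂, by rw [oinner_add_right, e₁, e₂]; push_cast; ring⟩
  | smul_left n u v _ _ h =>
    obtain ⟨k, e⟩ := h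
    exact ⟨n * k, by rw [oinner_zsmul_left, e]; push_cast; ring⟩
  | smul_right n u v _ _ h =>
    obtain ⟨k, e⟩ := h
    exact ⟨n * k, by rw [oinner_zsmul_right, e]; push_cast; ring⟩

lemma exists_int_oN_eq {x : Oct} (hx : x ∈ OctInt) : ∃ k : ℤ, oN x = k := by
  induction hx using Submodule.span_induction with
  | mem u hu =>
    obtain ⟨i, rfl⟩ := hu
    refine ⟨1, ?_⟩
    have h := oinner_octBasis i i
    rw [oinner_self, CartanMatrix.E₈_diag] at h
    push_cast at h ⊢
    linarith
  | zero => exact ⟨0, by simp [oN]⟩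
  | add u v hu hv h₁ h₂ =>
    obtain ⟨k₁, e₁⟩ := h₁
    obtain ⟨k₂, e₂⟩ := h₂
    obtain ⟨k₃, e₃⟩ := exists_int_oinner_eq hu hv
    exact ⟨k₁ + k₂ + k₃, by rw [oN_add, e₁, e₂, e₃]; push_cast; ring⟩
  | smul n u _ h =>
    obtain ⟨k, e⟩ := h
    exact ⟨n ^ 2 * k, by rw [oN_zsmul, e]; push_cast; ring⟩

lemma one_le_oN {x : Oct} (hx : x ∈ OctInt) (h0 : x ≠ 0) : 1 ≤ oN x := by
  obtain ⟨k, hk⟩ := exists_int_oN_eq hx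
  have hpos := oN_pos h0
  rw [hk] at hpos ⊢
  exact_mod_cast (Int.cast_pos.1 hpos : 0 < k)

lemma two_inv_le_dist {x y : Oct} (hx : x ∈ OctInt) (hy : y ∈ OctInt) (hne : x ≠ y) :
    2⁻¹ ≤ dist x y := by
  have h := one_le_oN (OctInt.sub_mem hx hy) (sub_ne_zero.2 hne)
  rw [oN_eq_norm_sq, Prod.fst_sub, Prod.snd_sub] at h
  rw [Prod.dist_eq, dist_eq_norm, dist_eq_norm]
  by_contra! H
  obtain ⟨H₁, H₂⟩ := max_lt_iff.1 H
  nlinarith [mul_self_lt_mul_self (norm_nonneg _) H₁, mul_self_lt_mul_self (norm_nonneg _) H₂]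

lemma discreteTopology_of_subset_octInt (S : Set (Oct × Oct × Oct))
    (hS : ∀ p ∈ S, p.1 ∈ OctInt ∧ p.2.1 ∈ OctInt ∧ p.2.2 ∈ OctInt) : DiscreteTopology S := by
  refine DiscreteTopology.of_forall_le_dist (r := 2⁻¹) (by norm_num) fun p q hpq => ?_
  obtain ⟨hp₁, hp₂, hp₃⟩ := hS p p.2
  obtain ⟨hq₁, hq₂, hq₃⟩ := hS q q.2
  have hne : p.1.1 ≠ q.1.1 ∨ p.1.2.1 ≠ q.1.2.1 ∨ p.1.2.2 ≠ q.1.2.2 := by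
    contrapose! hpq
    exact Subtype.ext (Prod.ext hpq.1 (Prod.ext hpq.2.1 hpq.2.2))
  rw [Subtype.dist_eq, Prod.dist_eq, Prod.dist_eq (x := (p : Oct × Oct × Oct).2)]
  simp only [le_max_iff]
  rcases hne with h | h | h
  · exact Or.inl (two_inv_le_dist hp₁ hq₁ h)
  · exact Or.inr (Or.inl (two_inv_le_dist hp₂ hq₂ h))
  · exact Or.inr (Or.inr (two_inv_le_dist hp₃ hq₃ h))

lemma _root_.Submodule.eq_top_of_forall_mem_axes {R M : Type*} [Semiring R] [AddCommMonoid M]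
    [Module R M] (P : Submodule R (M × M × M)) {s : Set M} (hs : Submodule.span R s = ⊤)
    (h : ∀ x ∈ s, (x, 0, 0) ∈ P ∧ (0, x, 0) ∈ P ∧ (0, 0, x) ∈ P) : P = ⊤ := by
  have axes : ∀ x : M, (x, 0, 0) ∈ P ∧ (0, x, 0) ∈ P ∧ (0, 0, x) ∈ P := by
    intro x
    induction (hs ▸ Submodule.mem_top : x ∈ Submodule.span R s) using Submodule.span_induction with
    | mem x hx => exact h x hx
    | zero => exact ⟨P.zero_mem, P.zero_mem, P.zero_mem⟩
    | add x y _ _ hx hy =>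
      exact ⟨by simpa using P.add_mem hx.1 hy.1, by simpa using P.add_mem hx.2.1 hy.2.1,
        by simpa using P.add_mem hx.2.2 hy.2.2⟩
    | smul r x _ hx =>
      exact ⟨by simpa using P.smul_mem r hx.1, by simpa using P.smul_mem r hx.2.1,
        by simpa using P.smul_mem r hx.2.2⟩
  refine eq_top_iff.2 fun p _ => ?_
  have hp : p = (p.1, 0, 0) + (0, p.2.1, 0) + (0, 0, p.2.2) := by simp
  rw [hp]
  exact P.add_mem (P.add_mem (axes _).1 (axes _).2.1) (axes _).2.2

def IsEvenLattice {V : Type*} (B : V → V → ℝ) (S : Set V) : Prop :=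
  ∀ v ∈ S, ∃ k : ℤ, B v v / 2 = 2 * (k : ℝ)

def IsUnimodularLattice {V : Type*} (B : V → V → ℝ) (S : Set V) : Prop :=
  ∀ v : V, v ∈ S ↔ ∀ w ∈ S, ∃ k : ℤ, B v w / 2 = (k : ℝ)

def Lambda (Φ Ψ : AddSubgroup Oct) : Set (Oct × Oct × Oct) :=
  {p : Oct × Oct × Oct | p.1 ∈ OctInt ∧ p.2.1 ∈ OctInt ∧ p.2.2 ∈ OctInt ∧
    p.1 + p.2.1 ∈ Φ ∧ p.2.1 + p.2.2 ∈ Φ ∧ p.1 + p.2.2 ∈ Φ ∧ p.1 + p.2.1 + p.2.2 ∈ Ψ}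

section Lambda

variable {Φ Ψ : AddSubgroup Oct}

lemma two_le_oN_of_isEvenLattice (hΦ : IsEvenLattice oinner Φ) {x : Oct} (hx : x ∈ Φ)
    (h0 : x ≠ 0) : 2 ≤ oN x := by
  obtain ⟨k, hk⟩ := hΦ x hx
  rw [oinner_self_div_two] at hk
  have hpos := oN_pos h0
  rw [hk] at hpos ⊢
  have : 0 < k := by exact_mod_cast pos_of_mul_pos_right hpos zero_le_two
  have : (1 : ℝ) ≤ k := by exact_mod_cast this
  linarith

lemma add_self_mem_of_inf_eq (hint : ((Φ ⊓ Ψ : AddSubgroup Oct) : Set Oct) = twoO) {x : Oct}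
    (hx : x ∈ OctInt) : x + x ∈ Φ ∧ x + x ∈ Ψ :=
  AddSubgroup.mem_inf.1 (show x + x ∈ ((Φ ⊓ Ψ : AddSubgroup Oct) : Set Oct) from
    hint ▸ ⟨x, hx, rfl⟩)

lemma oN_ne_two_of_mem_inf (hint : ((Φ ⊓ Ψ : AddSubgroup Oct) : Set Oct) = twoO) {x : Oct}
    (hxΦ : x ∈ Φ) (hxΨ : x ∈ Ψ) : oN x ≠ 2 := by
  obtain ⟨u, hu, rfl⟩ : x ∈ twoO := hint ▸ AddSubgroup.mem_inf.2 ⟨hxΦ, hxΨ⟩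
  rw [oN_add_self]
  rcases eq_or_ne u 0 with rfl | hu0
  · simp
  · linarith [one_le_oN hu hu0]

lemma oN_add_oN_ne_two (hΦ : IsEvenLattice oinner Φ)
    (hint : ((Φ ⊓ Ψ : AddSubgroup Oct) : Set Oct) = twoO) {a b : Oct} (ha : a ∈ Φ) (hb : b ∈ Φ)
    (hab : a + b ∈ Ψ) : oN a + oN b ≠ 2 := by
  intro h
  rcases eq_or_ne a 0 with rfl | ha0
  · rw [zero_add] at hab
    exact oN_ne_two_of_mem_inf hint hb hab (by simpa using h)
  rcases eq_or_ne b 0 with rfl | hb0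
  · rw [add_zero] at hab
    exact oN_ne_two_of_mem_inf hint ha hab (by simpa using h)
  linarith [two_le_oN_of_isEvenLattice hΦ ha ha0, two_le_oN_of_isEvenLattice hΦ hb hb0]

lemma mem_Lambda_of_add_mem (hΦO : (Φ : Set Oct) ⊆ OctInt) (hΨO : (Ψ : Set Oct) ⊆ OctInt)
    {a b c : Oct} (hab : a + b ∈ Φ) (hbc : b + c ∈ Φ) (hac : a + c ∈ Φ) (habc : a + b + c ∈ Ψ) :
    (a, b, c) ∈ Lambda Φ Ψ := by
  refine ⟨?_, ?_, ?_, hab, hbc, hac, habc⟩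
  · convert OctInt.sub_mem (OctInt.add_mem (hΦO hab) (hΦO hac)) (hΨO habc) using 1; abel
  · convert OctInt.sub_mem (OctInt.add_mem (hΦO hab) (hΦO hbc)) (hΨO habc) using 1; abel
  · convert OctInt.sub_mem (OctInt.add_mem (hΦO hac) (hΦO hbc)) (hΨO habc) using 1; abel

lemma diag_mem_Lambda (hΦO : (Φ : Set Oct) ⊆ OctInt) (hΨO : (Ψ : Set Oct) ⊆ OctInt)
    (hint : ((Φ ⊓ Ψ : AddSubgroup Oct) : Set Oct) = twoO) {y : Oct} (hy : y ∈ Ψ) :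
    (y, y, y) ∈ Lambda Φ Ψ := by
  have h2y := add_self_mem_of_inf_eq hint (hΨO hy)
  exact mem_Lambda_of_add_mem hΦO hΨO h2y.1 h2y.1 h2y.1 (add_mem h2y.2 hy)

lemma pairs_mem_Lambda (hΦO : (Φ : Set Oct) ⊆ OctInt) (hΨO : (Ψ : Set Oct) ⊆ OctInt)
    (hint : ((Φ ⊓ Ψ : AddSubgroup Oct) : Set Oct) = twoO) {x : Oct} (hx : x ∈ Φ) :
    (x, x, 0) ∈ Lambda Φ Ψ ∧ (x, 0, x) ∈ Lambda Φ Ψ ∧ (0, x, x) ∈ Lambda Φ Ψ := by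
  have h2x := add_self_mem_of_inf_eq hint (hΦO hx)
  refine ⟨mem_Lambda_of_add_mem hΦO hΨO ?_ ?_ ?_ ?_, mem_Lambda_of_add_mem hΦO hΨO ?_ ?_ ?_ ?_,
    mem_Lambda_of_add_mem hΦO hΨO ?_ ?_ ?_ ?_⟩ <;> simp [hx, h2x]

lemma doubles_mem_Lambda (hΦO : (Φ : Set Oct) ⊆ OctInt) (hΨO : (Ψ : Set Oct) ⊆ OctInt)
    (hint : ((Φ ⊓ Ψ : AddSubgroup Oct) : Set Oct) = twoO) {x : Oct} (hx : x ∈ OctInt) :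
    (x + x, 0, 0) ∈ Lambda Φ Ψ ∧ (0, x + x, 0) ∈ Lambda Φ Ψ ∧ (0, 0, x + x) ∈ Lambda Φ Ψ := by
  have h2x := add_self_mem_of_inf_eq hint hx
  refine ⟨mem_Lambda_of_add_mem hΦO hΨO ?_ ?_ ?_ ?_, mem_Lambda_of_add_mem hΦO hΨO ?_ ?_ ?_ ?_,
    mem_Lambda_of_add_mem hΦO hΨO ?_ ?_ ?_ ?_⟩ <;> simp [h2x, zero_mem]

lemma discreteTopology_Lambda : DiscreteTopology (Lambda Φ Ψ) :=
  discreteTopology_of_subset_octInt _ fun _ hp => ⟨hp.1, hp.2.1, hp.2.2.1⟩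

lemma span_Lambda_eq_top (hΦO : (Φ : Set Oct) ⊆ OctInt) (hΨO : (Ψ : Set Oct) ⊆ OctInt)
    (hint : ((Φ ⊓ Ψ : AddSubgroup Oct) : Set Oct) = twoO)
    (hspan : Submodule.span ℝ (Φ : Set Oct) = ⊤) : Submodule.span ℝ (Lambda Φ Ψ) = ⊤ := by
  refine Submodule.eq_top_of_forall_mem_axes _ hspan fun x hx => ?_
  have halve : ∀ y : Oct × Oct × Oct, y + y ∈ Lambda Φ Ψ → y ∈ Submodule.span ℝ (Lambda Φ Ψ) :=
    fun y hy => by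
      simpa [← two_smul ℝ y, smul_smul] using
        Submodule.smul_mem _ (2⁻¹ : ℝ) (Submodule.subset_span hy)
  obtain ⟨h₁, h₂, h₃⟩ := doubles_mem_Lambda hΦO hΨO hint (hΦO hx)
  exact ⟨halve _ (by simpa using h₁), halve _ (by simpa using h₂), halve _ (by simpa using h₃)⟩

lemma isEvenLattice_Lambda (hΦ : IsEvenLattice oinner Φ) (hΨ : IsEvenLattice oinner Ψ) :
    IsEvenLattice oinner3 (Lambda Φ Ψ) := by
  rintro ⟨a, b, c⟩ ⟨-, -, -, hab, hbc, hac, habc⟩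
  obtain ⟨k₁, e₁⟩ := hΦ _ hab
  obtain ⟨k₂, e₂⟩ := hΦ _ hbc
  obtain ⟨k₃, e₃⟩ := hΦ _ hac
  obtain ⟨k₄, e₄⟩ := hΨ _ habc
  rw [oinner_self_div_two] at e₁ e₂ e₃ e₄
  refine ⟨k₁ + k₂ + k₃ - k₄, ?_⟩
  rw [oinner3_self_div_two]
  dsimp only
  rw [oN_add_add, e₁, e₂, e₃, e₄]
  push_cast
  ring

lemma isUnimodularLattice_Lambda (hΦO : (Φ : Set Oct) ⊆ OctInt)
    (hΨO : (Ψ : Set Oct) ⊆ OctInt) (hint : ((Φ ⊓ Ψ : AddSubgroup Oct) : Set Oct) = twoO)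
    (hΦ : IsUnimodularLattice oinner Φ) (hΨ : IsUnimodularLattice oinner Ψ) :
    IsUnimodularLattice oinner3 (Lambda Φ Ψ) := by
  rintro ⟨a, b, c⟩
  constructor
  · rintro ⟨-, hb, -, hab, hbc, -, habc⟩ ⟨a', b', c'⟩ ⟨-, hb', -, hab', hbc', -, habc'⟩
    obtain ⟨k₁, e₁⟩ := (hΨ _).1 habc _ habc'
    obtain ⟨k₂, e₂⟩ := (hΦ _).1 hab _ hbc'
    obtain ⟨k₃, e₃⟩ := (hΦ _).1 hbc _ hab'
    obtain ⟨k₄, e₄⟩ := exists_int_oinner_eq hb hb'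
    refine ⟨k₁ - k₂ - k₃ + k₄, ?_⟩
    rw [oinner3_mk]
    push_cast
    linarith
  · intro H
    refine mem_Lambda_of_add_mem hΦO hΨO ?_ ?_ ?_ ?_
    · refine (hΦ _).2 fun x hx => ?_
      simpa [oinner3_eq, oinner_add_left] using H _ (pairs_mem_Lambda hΦO hΨO hint hx).1
    · refine (hΦ _).2 fun x hx => ?_
      simpa [oinner3_eq, oinner_add_left] using H _ (pairs_mem_Lambda hΦO hΨO hint hx).2.2
    · refine (hΦ _).2 fun x hx => ?_
      simpa [oinner3_eq, oinner_add_left] using H _ (pairs_mem_Lambda hΦO hΨO hint hx).2.1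
    · refine (hΨ _).2 fun y hy => ?_
      simpa [oinner3_eq, oinner_add_left] using H _ (diag_mem_Lambda hΦO hΨO hint hy)

lemma oinner3_self_div_two_ne_two_of_mem_Lambda (hΦ : IsEvenLattice oinner Φ)
    (hint : ((Φ ⊓ Ψ : AddSubgroup Oct) : Set Oct) = twoO) :
    ∀ v ∈ Lambda Φ Ψ, oinner3 v v / 2 ≠ 2 := by
  rintro ⟨a, b, c⟩ ⟨ha, hb, hc, hab, hbc, hac, habc⟩ h
  rw [oinner3_self_div_two] at h
  obtain rfl | rfl | rfl : a = 0 ∨ b = 0 ∨ c = 0 := by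
    by_contra! H
    linarith [one_le_oN ha H.1, one_le_oN hb H.2.1, one_le_oN hc H.2.2]
  · exact oN_add_oN_ne_two hΦ hint (by simpa using hab) (by simpa using hac) (by simpa using habc)
      (by simpa using h)
  · exact oN_add_oN_ne_two hΦ hint (by simpa using hab) (by simpa using hbc) (by simpa using habc)
      (by simpa using h)
  · exact oN_add_oN_ne_two hΦ hint (by simpa using hac) (by simpa using hbc) (by simpa using habc)
      (by simpa using h)

end Lambda

theorem LambdaPhiPsi_is_Leech_general (Φ Ψ : AddSubgroup Oct)
    (hΦO : (Φ : Set Oct) ⊆ (OctInt : Set Oct)) (hΨO : (Ψ : Set Oct) ⊆ (OctInt : Set Oct))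
    (hΦ : DiscreteTopology Φ ∧ Submodule.span ℝ (Φ : Set Oct) = ⊤ ∧
      (∀ v ∈ Φ, ∃ k : ℤ, oinner v v / 2 = 2 * (k : ℝ)) ∧
      (∀ v : Oct, v ∈ Φ ↔ ∀ w ∈ Φ, ∃ k : ℤ, oinner v w / 2 = (k : ℝ)))
    (hΨ : DiscreteTopology Ψ ∧ Submodule.span ℝ (Ψ : Set Oct) = ⊤ ∧
      (∀ v ∈ Ψ, ∃ k : ℤ, oinner v v / 2 = 2 * (k : ℝ)) ∧
      (∀ v : Oct, v ∈ Ψ ↔ ∀ w ∈ Ψ, ∃ k : ℤ, oinner v w / 2 = (k : ℝ)))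
    (hint : ((Φ ⊓ Ψ : AddSubgroup Oct) : Set Oct) = twoO)
    (L : Set (Oct × Oct × Oct))
    (hL : L = {p : Oct × Oct × Oct | p.1 ∈ OctInt ∧ p.2.1 ∈ OctInt ∧ p.2.2 ∈ OctInt ∧
      p.1 + p.2.1 ∈ Φ ∧ p.2.1 + p.2.2 ∈ Φ ∧ p.1 + p.2.2 ∈ Φ ∧
      p.1 + p.2.1 + p.2.2 ∈ Ψ}) :
    DiscreteTopology L ∧ Submodule.span ℝ L = ⊤ ∧
      (∀ v ∈ L, ∃ k : ℤ, oinner3 v v / 2 = 2 * (k : ℝ)) ∧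
      (∀ v : Oct × Oct × Oct, v ∈ L ↔ ∀ w ∈ L, ∃ k : ℤ, oinner3 v w / 2 = (k : ℝ)) ∧
      (∀ v ∈ L, oinner3 v v / 2 ≠ 2) := by
  obtain ⟨-, hΦspan, hΦeven, hΦdual⟩ := hΦ
  obtain ⟨-, -, hΨeven, hΨdual⟩ := hΨ
  subst hL
  exact ⟨discreteTopology_Lambda, span_Lambda_eq_top hΦO hΨO hint hΦspan,
    isEvenLattice_Lambda hΦeven hΨeven, isUnimodularLattice_Lambda hΦO hΨO hint hΦdual hΨdual,
    oinner3_self_div_two_ne_two_of_mem_Lambda hΦeven hint⟩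

/-- Given two `E₈` sublattices `Φ, Ψ` of `O` with `Φ + Ψ = O` and `Φ ∩ Ψ = 2O`,
the lattice `Λ(Φ,Ψ) = {(a,b,c) ∈ O³ : a+b, b+c, a+c ∈ Φ, a+b+c ∈ Ψ}` is an even
unimodular full-rank lattice in `𝕆³ ≅ ℝ²⁴` (w.r.t. `½⟨x,y⟩`) with no vector of
norm `2`: it is a Leech lattice. -/
theorem LambdaPhiPsi_is_Leech (Φ Ψ : AddSubgroup Oct)
    (hΦO : (Φ : Set Oct) ⊆ (OctInt : Set Oct)) (hΨO : (Ψ : Set Oct) ⊆ (OctInt : Set Oct))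
    (hΦ : DiscreteTopology Φ ∧ Submodule.span ℝ (Φ : Set Oct) = ⊤ ∧
      (∀ v ∈ Φ, ∃ k : ℤ, oinner v v / 2 = 2 * (k : ℝ)) ∧
      (∀ v : Oct, v ∈ Φ ↔ ∀ w ∈ Φ, ∃ k : ℤ, oinner v w / 2 = (k : ℝ)))
    (hΨ : DiscreteTopology Ψ ∧ Submodule.span ℝ (Ψ : Set Oct) = ⊤ ∧
      (∀ v ∈ Ψ, ∃ k : ℤ, oinner v v / 2 = 2 * (k : ℝ)) ∧
      (∀ v : Oct, v ∈ Ψ ↔ ∀ w ∈ Ψ, ∃ k : ℤ, oinner v w / 2 = (k : ℝ)))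
    (hsum : Φ ⊔ Ψ = (OctInt : Submodule ℤ Oct).toAddSubgroup)
    (hint : ((Φ ⊓ Ψ : AddSubgroup Oct) : Set Oct) = twoO)
    (L : Set (Oct × Oct × Oct))
    (hL : L = {p : Oct × Oct × Oct | p.1 ∈ OctInt ∧ p.2.1 ∈ OctInt ∧ p.2.2 ∈ OctInt ∧
      p.1 + p.2.1 ∈ Φ ∧ p.2.1 + p.2.2 ∈ Φ ∧ p.1 + p.2.2 ∈ Φ ∧
      p.1 + p.2.1 + p.2.2 ∈ Ψ}) :
    DiscreteTopology L ∧ Submodule.span ℝ L = ⊤ ∧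
      (∀ v ∈ L, ∃ k : ℤ, oinner3 v v / 2 = 2 * (k : ℝ)) ∧
      (∀ v : Oct × Oct × Oct, v ∈ L ↔ ∀ w ∈ L, ∃ k : ℤ, oinner3 v w / 2 = (k : ℝ)) ∧
      (∀ v ∈ L, oinner3 v v / 2 ≠ 2) :=
  LambdaPhiPsi_is_Leech_general Φ Ψ hΦO hΨO hΦ hΨ hint L hL

end Octonion
end
end

section
/- Let Φ and Ψ be subgroups of O with 2O ⊆ Φ, 2O ⊆ Ψ, Φ + Ψ = O and Φ ∩ Ψ = 2O. Then the following three subsets of O³ are equal: (1) {(a,b,c) ∈ O³ : a+b ∈ Φ, b+c ∈ Φ, a+c ∈ Φ, a+b+c ∈ Ψ}; (2) {(x₁+z, x₂+z, x₃+z) : x₁,x₂,x₃ ∈ Φ, x₁+x₂+x₃ ∈ Ψ, z ∈ Ψ}; (3) {(x+y+z, x+z, y+z) : x,y ∈ Φ, z ∈ Ψ}. -/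
noncomputable section

open scoped Quaternion

namespace Octonion

/-- The three descriptions of `Λ(Φ,Ψ)` agree. -/
theorem LambdaPhiPsi_three_descriptions (Φ Ψ : AddSubgroup Oct)
    (hΦO : (Φ : Set Oct) ⊆ (OctInt : Set Oct)) (hΨO : (Ψ : Set Oct) ⊆ (OctInt : Set Oct))
    (h2Φ : twoO ⊆ (Φ : Set Oct)) (h2Ψ : twoO ⊆ (Ψ : Set Oct))
    (hsum : Φ ⊔ Ψ = (OctInt : Submodule ℤ Oct).toAddSubgroup)
    (hint : ((Φ ⊓ Ψ : AddSubgroup Oct) : Set Oct) = twoO) :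
    ({p : Oct × Oct × Oct | p.1 ∈ OctInt ∧ p.2.1 ∈ OctInt ∧ p.2.2 ∈ OctInt ∧
        p.1 + p.2.1 ∈ Φ ∧ p.2.1 + p.2.2 ∈ Φ ∧ p.1 + p.2.2 ∈ Φ ∧
        p.1 + p.2.1 + p.2.2 ∈ Ψ}
      = {p : Oct × Oct × Oct | ∃ x₁ x₂ x₃ z : Oct, x₁ ∈ Φ ∧ x₂ ∈ Φ ∧ x₃ ∈ Φ ∧
          x₁ + x₂ + x₃ ∈ Ψ ∧ z ∈ Ψ ∧ p = (x₁ + z, x₂ + z, x₃ + z)}) ∧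
    ({p : Oct × Oct × Oct | ∃ x₁ x₂ x₃ z : Oct, x₁ ∈ Φ ∧ x₂ ∈ Φ ∧ x₃ ∈ Φ ∧
          x₁ + x₂ + x₃ ∈ Ψ ∧ z ∈ Ψ ∧ p = (x₁ + z, x₂ + z, x₃ + z)}
      = {p : Oct × Oct × Oct | ∃ x y z : Oct, x ∈ Φ ∧ y ∈ Φ ∧ z ∈ Ψ ∧
          p = (x + y + z, x + z, y + z)}) := by
  have hdbl : ∀ x : Oct, x ∈ OctInt → x + x ∈ twoO := fun x hx => ⟨x, hx, rfl⟩
  constructor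
  · ext p
    simp only [Set.mem_setOf_eq]
    constructor
    · rintro ⟨ha, hb, hc, hab, hbc, hac, habc⟩
      have hc' : p.2.2 ∈ Φ ⊔ Ψ := by rw [hsum]; exact hc
      rw [AddSubgroup.mem_sup] at hc'
      obtain ⟨φ, hφ, ψ, hψ, hcφψ⟩ := hc'
      refine ⟨p.1 - ψ, p.2.1 - ψ, p.2.2 - ψ, ψ, ?_, ?_, ?_, ?_, hψ, ?_⟩
      · have h1 : p.1 - ψ = (p.1 + p.2.2) + φ - (p.2.2 + p.2.2) := by
          rw [show φ = p.2.2 - ψ by rw [← hcφψ]; abel]; abel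
        rw [h1]
        exact sub_mem (add_mem hac hφ) (h2Φ (hdbl _ hc))
      · have h1 : p.2.1 - ψ = (p.2.1 + p.2.2) + φ - (p.2.2 + p.2.2) := by
          rw [show φ = p.2.2 - ψ by rw [← hcφψ]; abel]; abel
        rw [h1]
        exact sub_mem (add_mem hbc hφ) (h2Φ (hdbl _ hc))
      · have h1 : p.2.2 - ψ = φ := by rw [← hcφψ]; abel
        rw [h1]; exact hφ
      · have h1 : p.1 - ψ + (p.2.1 - ψ) + (p.2.2 - ψ) =
            (p.1 + p.2.1 + p.2.2) - ψ - (ψ + ψ) := by abel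
        rw [h1]
        exact sub_mem (sub_mem habc hψ) (h2Ψ (hdbl _ (hΨO hψ)))
      · exact Prod.ext (by simp) (Prod.ext (by simp) (by simp))
    · rintro ⟨x₁, x₂, x₃, z, h1, h2, h3, hs, hz, rfl⟩
      have hzO : z ∈ OctInt := hΨO hz
      refine ⟨add_mem (hΦO h1) hzO, add_mem (hΦO h2) hzO, add_mem (hΦO h3) hzO,
        ?_, ?_, ?_, ?_⟩
      · have h : x₁ + z + (x₂ + z) = x₁ + x₂ + (z + z) := by abel
        rw [h]; exact add_mem (add_mem h1 h2) (h2Φ (hdbl _ hzO))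
      · have h : x₂ + z + (x₃ + z) = x₂ + x₃ + (z + z) := by abel
        rw [h]; exact add_mem (add_mem h2 h3) (h2Φ (hdbl _ hzO))
      · have h : x₁ + z + (x₃ + z) = x₁ + x₃ + (z + z) := by abel
        rw [h]; exact add_mem (add_mem h1 h3) (h2Φ (hdbl _ hzO))
      · have h : x₁ + z + (x₂ + z) + (x₃ + z) = (x₁ + x₂ + x₃) + z + (z + z) := by
          abel
        rw [h]; exact add_mem (add_mem hs hz) (h2Ψ (hdbl _ hzO))
  · ext p
    simp only [Set.mem_setOf_eq]
    constructor
    · rintro ⟨x₁, x₂, x₃, z, h1, h2, h3, hs, hz, rfl⟩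
      refine ⟨x₁ - x₃, x₁ - x₂, x₂ + x₃ - x₁ + z, sub_mem h1 h3, sub_mem h1 h2, ?_, ?_⟩
      · have h : x₂ + x₃ - x₁ + z = (x₁ + x₂ + x₃) - (x₁ + x₁) + z := by abel
        rw [h]
        exact add_mem (sub_mem hs (h2Ψ (hdbl _ (hΦO h1)))) hz
      · exact Prod.ext (by abel) (Prod.ext (by abel) (by abel))
    · rintro ⟨x, y, z, hx, hy, hz, rfl⟩
      refine ⟨x + y, x, y, z, add_mem hx hy, hx, hy, ?_, hz, ?_⟩
      · have h : x + y + x + y = (x + y) + (x + y) := by abel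
        rw [h]
        exact h2Ψ (hdbl _ (hΦO (add_mem hx hy)))
      · exact Prod.ext (by abel) (Prod.ext (by abel) (by abel))

end Octonion
end
end
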